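/- Let k, k₁, k₂ ∈ K_pol(ℝⁿ) and t₀ < t₁ be real numbers. Suppose there are constants C₀, C₁ > 0 such that k₁^{t_j} ∗ k₂^{t_j} ≤ C_j k^{t_j} pointwise on ℝⁿ for j = 0, 1 (convolution of functions). Then for every t ∈ [t₀,t₁] one has k₁^t ∗ k₂^t ≤ C_t k^t, where C_t = C₀^{(t₁−t)/(t₁−t₀)} C₁^{(t−t₀)/(t₁−t₀)} ≤ max{C₀, C₁}. -/

import Mathlib

open MeasureTheory Complex Filter
open scoped ENNReal RealInnerProductSpace ContDiff Classical

noncomputable section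

/-- Euclidean space `ℝⁿ`. -/
abbrev Euc (n : ℕ) := EuclideanSpace ℝ (Fin n)

/-- The Japanese bracket `⟨ξ⟩ = (1 + |ξ|²)^(1/2)`. -/
def jb {n : ℕ} (ξ : Euc n) : ℝ := Real.sqrt (1 + ‖ξ‖ ^ 2)

/-- `k` is a weight function of polynomial growth with constants `C`, `N`:
`k(ξ+η) ≤ C⟨ξ⟩^N k(η)`. -/
def IsPolWeightWith {n : ℕ} (k : Euc n → ℝ) (C N : ℝ) : Prop :=
  Measurable k ∧ (∀ ξ, 0 < k ξ) ∧ 0 < C ∧ 0 < N ∧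
    ∀ ξ η, k (ξ + η) ≤ C * jb ξ ^ N * k η

/-- `k ∈ 𝒦_pol(ℝⁿ)`. -/
def IsPolWeight {n : ℕ} (k : Euc n → ℝ) : Prop := ∃ C N : ℝ, IsPolWeightWith k C N

/-- Tempered distributions on `ℝⁿ`. -/
abbrev TD (n : ℕ) := SchwartzMap (Euc n) ℂ →L[ℝ] ℂ

/-- The Fourier transform (classical convention `∫ e^{-i⟨x,ξ⟩} f(x) dx`) of a function. -/
def ftP {n : ℕ} (f : Euc n → ℂ) (ξ : Euc n) : ℂ :=
  ∫ x, Complex.exp (-(Complex.I * ((⟪x, ξ⟫ : ℝ) : ℂ))) * f x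

/-- `g` is a function representative of the Fourier transform of the tempered
distribution `u`, i.e. `û = g`; equivalently `⟨u, φ⟩ = (2π)^{-n} ∫ g(ξ) (ℱφ)(-ξ) dξ`
for all Schwartz `φ`. -/
def FTrepr {n : ℕ} (u : TD n) (g : Euc n → ℂ) : Prop :=
  AEMeasurable g volume ∧
    (∀ φ : SchwartzMap (Euc n) ℂ, Integrable (fun ξ => g ξ * ftP (⇑φ) (-ξ)) volume) ∧
    ∀ φ : SchwartzMap (Euc n) ℂ,
      u φ = ((2 * Real.pi) ^ n)⁻¹ • ∫ ξ, g ξ * ftP (⇑φ) (-ξ)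

/-- The norm of `B_{p,k}(ℝⁿ)`, `‖u‖_{p,k} = ‖k û‖_{L^p}` (equal to `∞` if `û` is not a
function in the weighted `L^p` space). -/
def Bpknorm {n : ℕ} (k : Euc n → ℝ) (p : ℝ≥0∞) (u : TD n) : ℝ≥0∞ :=
  ⨅ (g : Euc n → ℂ) (_ : FTrepr u g), eLpNorm (fun ξ => k ξ • g ξ) p volume

/-- Membership in the space `B_{p,k}(ℝⁿ)`. -/
def MemBpk {n : ℕ} (k : Euc n → ℝ) (p : ℝ≥0∞) (u : TD n) : Prop :=
  ∃ g, FTrepr u g ∧ eLpNorm (fun ξ => k ξ • g ξ) p volume < ⊤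

/-- Multiplication of a tempered distribution by a (temperate-growth) smooth function. -/
def mulTD {n : ℕ} (u : TD n) (f : Euc n → ℂ) : TD n :=
  if hf : Function.HasTemperateGrowth f then
    u.comp (SchwartzMap.bilinLeftCLM (ContinuousLinearMap.mul ℝ ℂ) hf)
  else 0

/-- Translation `τ_y f = f(· - y)` of a function. -/
def trF {n : ℕ} (y : Euc n) (f : Euc n → ℂ) : Euc n → ℂ := fun x => f (x - y)

/-- The norm `‖u‖_{k,p,χ}` of the Kato–Sobolev type space `𝓑_k^p(ℝⁿ)`:
the `L^p`-norm in `y` of `‖u · τ_y χ‖_{𝓑_k}` (with `𝓑_k = B_{2,k}`). -/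
def BpNorm {n : ℕ} (k : Euc n → ℝ) (p : ℝ≥0∞) (χ : Euc n → ℂ) (u : TD n) : ℝ≥0∞ :=
  if p = ⊤ then ⨆ y : Euc n, Bpknorm k 2 (mulTD u (trF y χ))
  else (∫⁻ y, Bpknorm k 2 (mulTD u (trF y χ)) ^ p.toReal) ^ (1 / p.toReal)

/-- `χ ∈ C_0^∞(ℝⁿ)`: a smooth compactly supported function. -/
def IsTest {n : ℕ} (χ : Euc n → ℂ) : Prop := ContDiff ℝ ∞ χ ∧ HasCompactSupport χ

/-- The tempered distribution associated to a Schwartz function. -/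
def toTD {n : ℕ} (φ : SchwartzMap (Euc n) ℂ) : TD n :=
  if h : ∃ v : TD n, ∀ ψ : SchwartzMap (Euc n) ℂ, v ψ = ∫ x, φ x * ψ x then h.choose else 0

/-- Translation on Schwartz functions, `ψ ↦ ψ(· + y)`. -/
def shiftCLM {n : ℕ} (y : Euc n) : SchwartzMap (Euc n) ℂ →L[ℝ] SchwartzMap (Euc n) ℂ :=
  if h : ∃ M : SchwartzMap (Euc n) ℂ →L[ℝ] SchwartzMap (Euc n) ℂ,
      ∀ (ψ : SchwartzMap (Euc n) ℂ) (x : Euc n), M ψ x = ψ (x + y) then h.choose else 0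

/-- Convolution `f ∗ u` of a test function with a tempered distribution:
`⟨f ∗ u, ψ⟩ = ⟨u(x), ∫ f(y) ψ(x+y) dy⟩`. -/
def convTD {n : ℕ} (f : Euc n → ℂ) (u : TD n) : TD n :=
  if h : ∃ M : SchwartzMap (Euc n) ℂ →L[ℝ] SchwartzMap (Euc n) ℂ,
      ∀ (ψ : SchwartzMap (Euc n) ℂ) (x : Euc n), M ψ x = ∫ y, f y * ψ (x + y)
  then u.comp h.choose else 0

/-- Pointwise product of two Schwartz functions, as a Schwartz function. -/
def mulS {n : ℕ} (φ₁ φ₂ : SchwartzMap (Euc n) ℂ) : SchwartzMap (Euc n) ℂ :=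
  if h : ∃ ψ : SchwartzMap (Euc n) ℂ, ∀ x, ψ x = φ₁ x * φ₂ x then h.choose else 0

/-- Pairing of a tempered distribution with a function which happens to be Schwartz. -/
def pairF {n : ℕ} (u : TD n) (f : Euc n → ℂ) : ℂ :=
  if h : ∃ φ : SchwartzMap (Euc n) ℂ, ⇑φ = f then u h.choose else 0

/-- The tempered distribution `v` is represented by the function `f`. -/
def RepBy {n : ℕ} (v : TD n) (f : Euc n → ℂ) : Prop :=
  ∀ ψ : SchwartzMap (Euc n) ℂ, v ψ = ∫ x, f x * ψ x

/-- The `𝓑_k^p` norm of a function. -/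
def FnBNorm {n : ℕ} (k : Euc n → ℝ) (p : ℝ≥0∞) (χ : Euc n → ℂ) (f : Euc n → ℂ) : ℝ≥0∞ :=
  ⨅ (v : TD n) (_ : RepBy v f), BpNorm k p χ v

/-- A function belongs to `𝓑_k^p(ℝⁿ)`. -/
def FnMemB {n : ℕ} (k : Euc n → ℝ) (p : ℝ≥0∞) (χ : Euc n → ℂ) (f : Euc n → ℂ) : Prop :=
  FnBNorm k p χ f < ⊤

/-- The distributional partial derivative `∂_j u`. -/
def derivTD {n : ℕ} (j : Fin n) (u : TD n) : TD n :=
  -(u.comp (LineDeriv.lineDerivOpCLM ℝ (SchwartzMap (Euc n) ℂ) (EuclideanSpace.single j (1 : ℝ))))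

/-- The lattice `ℤⁿ ⊂ ℝⁿ`. -/
def intVec {n : ℕ} (γ : Fin n → ℤ) : Euc n := WithLp.toLp 2 (fun i => (γ i : ℝ))

/-- The distribution `v` is supported in the set `K`. -/
def SuppIn {n : ℕ} (v : TD n) (K : Set (Euc n)) : Prop :=
  ∀ φ : SchwartzMap (Euc n) ℂ, Disjoint (tsupport ⇑φ) K → v φ = 0


/-- interpolation of convolution inequalities: if
`k₁^{t_j} ∗ k₂^{t_j} ≤ C_j k^{t_j}` for `j = 0, 1`, then for every `t ∈ [t₀, t₁]`,
`k₁^t ∗ k₂^t ≤ C_t k^t` with `C_t = C₀^{(t₁-t)/(t₁-t₀)} C₁^{(t-t₀)/(t₁-t₀)} ≤ max{C₀,C₁}`. -/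
theorem stmt16 {n : ℕ} (k k₁ k₂ : Euc n → ℝ)
    (hk : IsPolWeight k) (hk₁ : IsPolWeight k₁) (hk₂ : IsPolWeight k₂)
    (t₀ t₁ : ℝ) (ht : t₀ < t₁) (C₀ C₁ : ℝ) (hC₀ : 0 < C₀) (hC₁ : 0 < C₁)
    (H₀ : ∀ ξ, (∫⁻ η, ENNReal.ofReal (k₁ η ^ t₀ * k₂ (ξ - η) ^ t₀)) ≤
        ENNReal.ofReal (C₀ * k ξ ^ t₀))
    (H₁ : ∀ ξ, (∫⁻ η, ENNReal.ofReal (k₁ η ^ t₁ * k₂ (ξ - η) ^ t₁)) ≤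
        ENNReal.ofReal (C₁ * k ξ ^ t₁)) :
    ∀ t ∈ Set.Icc t₀ t₁,
      (∀ ξ, (∫⁻ η, ENNReal.ofReal (k₁ η ^ t * k₂ (ξ - η) ^ t)) ≤
          ENNReal.ofReal (C₀ ^ ((t₁ - t) / (t₁ - t₀)) * C₁ ^ ((t - t₀) / (t₁ - t₀)) *
            k ξ ^ t)) ∧
      C₀ ^ ((t₁ - t) / (t₁ - t₀)) * C₁ ^ ((t - t₀) / (t₁ - t₀)) ≤ max C₀ C₁ := by
  obtain ⟨_, _, -, hkpos, -, -, -⟩ := hk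
  obtain ⟨_, _, hk₁m, hk₁pos, -, -, -⟩ := hk₁
  obtain ⟨_, _, hk₂m, hk₂pos, -, -, -⟩ := hk₂
  intro t htmem
  obtain ⟨ht0, ht1⟩ := htmem
  have hd : (0:ℝ) < t₁ - t₀ := sub_pos.mpr ht
  set θ : ℝ := (t₁ - t) / (t₁ - t₀) with hθdef
  have hθeq' : (t - t₀) / (t₁ - t₀) = 1 - θ := by
    rw [hθdef]; field_simp; ring
  have hθ0 : 0 ≤ θ := div_nonneg (by linarith) hd.le
  have hθ1 : θ ≤ 1 := by rw [hθdef, div_le_one hd]; linarith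
  have h1θ0 : 0 ≤ 1 - θ := by linarith
  have hexp : t₀ * θ + t₁ * (1 - θ) = t := by
    rw [hθdef]; field_simp; ring
  have hmaxpos : (0:ℝ) < max C₀ C₁ := lt_max_of_lt_left hC₀
  constructor
  · intro ξ
    rw [hθeq']
    have hkξ : 0 < k ξ := hkpos ξ
    rcases eq_or_lt_of_le ht0 with h0 | h0
    · -- t = t₀
      have hθeq1 : θ = 1 := by rw [hθdef, ← h0, div_self hd.ne']
      simp only [hθeq', hθeq1, sub_self, Real.rpow_one, Real.rpow_zero, mul_one]
      rw [← h0]; exact H₀ ξ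
    rcases eq_or_lt_of_le ht1 with h1 | h1
    · -- t = t₁
      have hθeq0 : θ = 0 := by rw [hθdef, h1, sub_self, zero_div]
      simp only [hθeq', hθeq0, sub_zero, Real.rpow_one, Real.rpow_zero, one_mul]
      rw [h1]; exact H₁ ξ
    -- interior case: use Hölder
    have hθpos : 0 < θ := div_pos (by linarith) hd
    have hθlt1 : θ < 1 := by rw [hθdef, div_lt_one hd]; linarith
    have h1θpos : 0 < 1 - θ := by linarith
    set F : Euc n → ℝ≥0∞ := fun η => (ENNReal.ofReal (k₁ η ^ t₀ * k₂ (ξ - η) ^ t₀)) ^ θ with hF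
    set G : Euc n → ℝ≥0∞ := fun η => (ENNReal.ofReal (k₁ η ^ t₁ * k₂ (ξ - η) ^ t₁)) ^ (1 - θ)
      with hG
    have hpq : (1/θ).HolderConjugate (1/(1-θ)) := by
      constructor
      · rw [one_div, one_div, inv_inv, inv_inv, inv_one]; ring
      · positivity
      · positivity
    have hsub : Measurable fun η : Euc n => k₂ (ξ - η) :=
      hk₂m.comp (measurable_const.sub measurable_id)
    have hmeas : ∀ s : ℝ, Measurable fun η : Euc n =>
        ENNReal.ofReal (k₁ η ^ s * k₂ (ξ - η) ^ s) := fun s =>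
      ((hk₁m.pow measurable_const).mul (hsub.pow measurable_const)).ennreal_ofReal
    have hFm : AEMeasurable F volume := ((hmeas t₀).pow measurable_const).aemeasurable
    have hGm : AEMeasurable G volume := ((hmeas t₁).pow measurable_const).aemeasurable
    have hpt : ∀ η, ENNReal.ofReal (k₁ η ^ t * k₂ (ξ - η) ^ t) = F η * G η := by
      intro η
      have ha : 0 < k₁ η := hk₁pos η
      have hb : 0 < k₂ (ξ - η) := hk₂pos (ξ - η)
      simp only [hF, hG]
      rw [ENNReal.ofReal_rpow_of_pos (by positivity),
        ENNReal.ofReal_rpow_of_pos (by positivity),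
        ← ENNReal.ofReal_mul (by positivity)]
      congr 1
      rw [Real.mul_rpow (by positivity) (by positivity),
        Real.mul_rpow (by positivity) (by positivity),
        ← Real.rpow_mul ha.le, ← Real.rpow_mul hb.le,
        ← Real.rpow_mul ha.le, ← Real.rpow_mul hb.le]
      calc k₁ η ^ t * k₂ (ξ - η) ^ t
          = k₁ η ^ (t₀ * θ + t₁ * (1 - θ)) * k₂ (ξ - η) ^ (t₀ * θ + t₁ * (1 - θ)) := by
            rw [hexp]
        _ = k₁ η ^ (t₀ * θ) * k₂ (ξ - η) ^ (t₀ * θ) *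
            (k₁ η ^ (t₁ * (1 - θ)) * k₂ (ξ - η) ^ (t₁ * (1 - θ))) := by
            rw [Real.rpow_add ha, Real.rpow_add hb]; ring
    have hθinv : θ * (1/θ) = 1 := by field_simp
    have h1θinv : (1 - θ) * (1/(1-θ)) = 1 := by field_simp
    calc (∫⁻ η, ENNReal.ofReal (k₁ η ^ t * k₂ (ξ - η) ^ t))
        = ∫⁻ η, (F * G) η := by
          refine lintegral_congr fun η => ?_
          rw [hpt η]; rfl
      _ ≤ (∫⁻ η, F η ^ (1/θ)) ^ (1/(1/θ)) * (∫⁻ η, G η ^ (1/(1-θ))) ^ (1/(1/(1-θ))) :=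
          ENNReal.lintegral_mul_le_Lp_mul_Lq volume hpq hFm hGm
      _ = (∫⁻ η, ENNReal.ofReal (k₁ η ^ t₀ * k₂ (ξ - η) ^ t₀)) ^ θ *
          (∫⁻ η, ENNReal.ofReal (k₁ η ^ t₁ * k₂ (ξ - η) ^ t₁)) ^ (1 - θ) := by
          rw [one_div_one_div, one_div_one_div]
          congr 1
          · congr 1
            refine lintegral_congr fun η => ?_
            rw [hF, ← ENNReal.rpow_mul, hθinv, ENNReal.rpow_one]
          · congr 1
            refine lintegral_congr fun η => ?_
            rw [hG, ← ENNReal.rpow_mul, h1θinv, ENNReal.rpow_one]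
      _ ≤ (ENNReal.ofReal (C₀ * k ξ ^ t₀)) ^ θ * (ENNReal.ofReal (C₁ * k ξ ^ t₁)) ^ (1 - θ) :=
          mul_le_mul' (ENNReal.rpow_le_rpow (H₀ ξ) hθ0) (ENNReal.rpow_le_rpow (H₁ ξ) h1θ0)
      _ = ENNReal.ofReal (C₀ ^ θ * C₁ ^ (1 - θ) * k ξ ^ t) := by
          rw [ENNReal.ofReal_rpow_of_pos (by positivity),
            ENNReal.ofReal_rpow_of_pos (by positivity),
            ← ENNReal.ofReal_mul (by positivity)]
          congr 1
          rw [Real.mul_rpow hC₀.le (by positivity), Real.mul_rpow hC₁.le (by positivity),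
            ← Real.rpow_mul hkξ.le, ← Real.rpow_mul hkξ.le]
          calc C₀ ^ θ * k ξ ^ (t₀ * θ) * (C₁ ^ (1-θ) * k ξ ^ (t₁ * (1-θ)))
              = C₀ ^ θ * C₁ ^ (1-θ) * (k ξ ^ (t₀ * θ) * k ξ ^ (t₁ * (1-θ))) := by ring
            _ = C₀ ^ θ * C₁ ^ (1-θ) * k ξ ^ t := by rw [← Real.rpow_add hkξ, hexp]
    -- align the constant in the goal
  · rw [hθeq']
    calc C₀ ^ θ * C₁ ^ (1 - θ)
        ≤ (max C₀ C₁) ^ θ * (max C₀ C₁) ^ (1 - θ) := by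
          gcongr
          · exact le_max_left _ _
          · exact le_max_right _ _
      _ = (max C₀ C₁) ^ (θ + (1 - θ)) := (Real.rpow_add hmaxpos _ _).symm
      _ = max C₀ C₁ := by rw [show θ + (1 - θ) = 1 by ring, Real.rpow_one]


end
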